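/- arXiv:2409.06288 — 5 statements merged into one kernel-verified Lean document; each statement's English description precedes it below -/
import Mathlib

section
/- Doubly robust property (correct propensity score): if π(X)=P(Z=1|X) a.s. (the propensity model is correct) and m₁(X) is any bounded measurable function, then E[ Z·Y/π(X) − (Z−π(X))/π(X) · m₁(X) ] = E[Y(1)], regardless of whether m₁(X) equals E[Y|X,Z=1]. -/
open MeasureTheory ProbabilityTheory


/-- If `W ⟂ Z | mX` and `Z` is a 0/1 variable, then `E[Z | mX ⊔ σ(W)] = E[Z | mX]` a.e. -/
lemma condexp_sup_comap_of_condIndepFun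
    {Ω : Type*} (mX : MeasurableSpace Ω) [mΩ : MeasurableSpace Ω] [StandardBorelSpace Ω]
    (μ : Measure Ω) [IsProbabilityMeasure μ]
    (hmX : mX ≤ mΩ)
    (W Z : Ω → ℝ) (hW : Measurable[mΩ] W) (hZ : Measurable[mΩ] Z)
    (hZbin : ∀ ω, Z ω = 0 ∨ Z ω = 1)
    (hindep : CondIndepFun mX hmX W Z μ) :
    μ[Z | mX ⊔ MeasurableSpace.comap W Real.measurableSpace] =ᵐ[μ] μ[Z | mX] := by
  have hmW : MeasurableSpace.comap W Real.measurableSpace ≤ mΩ := hW.comap_le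
  have hm' : mX ⊔ MeasurableSpace.comap W Real.measurableSpace ≤ mΩ := sup_le hmX hmW
  have hZint : Integrable Z μ := by
    refine Integrable.mono' (integrable_const (1 : ℝ)) (hZ.aestronglyMeasurable (μ := μ)) ?_
    filter_upwards with ω
    rcases hZbin ω with h | h <;> simp [h]
  set p : Ω → ℝ := μ[Z | mX] with hp_def
  set A : Set Ω := Z ⁻¹' {1} with hA_def
  have hAmeas : MeasurableSet[mΩ] A := hZ (measurableSet_singleton 1)
  have hZ_eq : Z = A.indicator (fun _ => (1 : ℝ)) := by
    funext ω
    rcases hZbin ω with h | h <;>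
      simp [Set.indicator_apply, hA_def, Set.mem_preimage, h]
  have hpA : (μ⟦A | mX⟧) =ᵐ[μ] p := by
    rw [hp_def, hZ_eq]
  have key : ∀ s : Set Ω, MeasurableSet[mX ⊔ MeasurableSpace.comap W Real.measurableSpace] s →
      ∫ x in s, p x ∂μ = ∫ x in s, Z x ∂μ := by
    have hgen : (mX ⊔ MeasurableSpace.comap W Real.measurableSpace)
        = MeasurableSpace.generateFrom
        {t | ∃ E B, MeasurableSet[mX] E ∧
          MeasurableSet[MeasurableSpace.comap W Real.measurableSpace] B ∧ t = E ∩ B} := by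
      refine le_antisymm (sup_le ?_ ?_) (MeasurableSpace.generateFrom_le ?_)
      · intro E hE
        exact MeasurableSpace.measurableSet_generateFrom
          ⟨E, Set.univ, hE, MeasurableSet.univ, (Set.inter_univ E).symm⟩
      · intro B hB
        exact MeasurableSpace.measurableSet_generateFrom
          ⟨Set.univ, B, MeasurableSet.univ, hB, (Set.univ_inter B).symm⟩
      · rintro t ⟨E, B, hE, hB, rfl⟩
        have hle1 : mX ≤ mX ⊔ MeasurableSpace.comap W Real.measurableSpace := le_sup_left
        have hle2 : MeasurableSpace.comap W Real.measurableSpace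
            ≤ mX ⊔ MeasurableSpace.comap W Real.measurableSpace := le_sup_right
        exact (hle1 E hE).inter (hle2 B hB)
    have hpi : IsPiSystem {t | ∃ E B, MeasurableSet[mX] E ∧
        MeasurableSet[MeasurableSpace.comap W Real.measurableSpace] B ∧ t = E ∩ B} := by
      rintro t1 ⟨E, B, hE, hB, rfl⟩ t2 ⟨E', B', hE', hB', rfl⟩ _
      exact ⟨E ∩ E', B ∩ B', hE.inter hE', hB.inter hB', by
        rw [Set.inter_inter_inter_comm]⟩
    refine MeasurableSpace.induction_on_inter
      (m := mX ⊔ MeasurableSpace.comap W Real.measurableSpace) hgen hpi (by simp) ?_ ?_ ?_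
    · -- basic sets E ∩ B
      rintro t ⟨E, B, hE, hB, rfl⟩
      obtain ⟨s, hs, rfl⟩ := hB
      set B : Set Ω := W ⁻¹' s with hB_def
      have hBmeas : MeasurableSet[mΩ] B := hW hs
      have hfac : (μ⟦B ∩ A | mX⟧) =ᵐ[μ] (μ⟦B | mX⟧) * (μ⟦A | mX⟧) :=
        ((condIndepFun_iff mX hmX W Z hW hZ μ).mp hindep B A ⟨s, hs, rfl⟩
          ⟨{1}, measurableSet_singleton 1, rfl⟩)
      set q : Ω → ℝ := μ⟦B | mX⟧ with hq_def
      have hEmeas : MeasurableSet[mΩ] E := hmX E hE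
      have h1Bint : Integrable (B.indicator (fun _ => (1:ℝ))) μ :=
        (integrable_const (1:ℝ)).indicator hBmeas
      have hBAint : Integrable ((B ∩ A).indicator (fun _ => (1:ℝ))) μ :=
        (integrable_const (1:ℝ)).indicator (hBmeas.inter hAmeas)
      have hRHS : ∫ x in E ∩ B, Z x ∂μ = ∫ x in E, (q x * p x) ∂μ := by
        have h1 : ∫ x in E ∩ B, Z x ∂μ = ∫ x in E, ((B ∩ A).indicator (fun _ => (1:ℝ))) x ∂μ := by
          rw [← setIntegral_indicator hBmeas]
          congr 1
          rw [hZ_eq, Set.indicator_indicator]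
        rw [h1, ← setIntegral_condExp hmX hBAint hE]
        refine setIntegral_congr_ae hEmeas ?_
        filter_upwards [hfac, hpA] with ω h1 h2 _
        rw [h1]
        simp only [Pi.mul_apply, h2, hq_def]
      have hh_sm : StronglyMeasurable[mX] (E.indicator p) :=
        stronglyMeasurable_condExp.indicator hE
      have hh_bd : ∀ (g : Ω → ℝ), (∀ x, |g x| ≤ 1) →
          ∀ᵐ ω ∂μ, ‖E.indicator p ω * g ω‖ ≤ ‖p ω‖ := by
        intro g hg
        filter_upwards with ω
        by_cases hωE : ω ∈ E
        · simp only [Set.indicator_of_mem hωE]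
          calc ‖p ω * g ω‖ = ‖p ω‖ * ‖g ω‖ := norm_mul _ _
          _ ≤ ‖p ω‖ * 1 := by
              exact mul_le_mul_of_nonneg_left (by rw [Real.norm_eq_abs]; exact hg ω)
                (norm_nonneg _)
          _ = ‖p ω‖ := mul_one _
        · simp [Set.indicator_of_notMem hωE, norm_nonneg]
      have hbd1 : ∀ x, |B.indicator (fun _ => (1:ℝ)) x| ≤ 1 := by
        intro x
        by_cases hx : x ∈ B <;> simp [Set.indicator_apply, hx]
      have hint_h1B : Integrable (E.indicator p * B.indicator (fun _ => (1:ℝ))) μ := by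
        refine Integrable.mono' (integrable_condExp : Integrable p μ).norm
          (((hh_sm.mono hmX).aestronglyMeasurable).mul
            ((stronglyMeasurable_const.indicator hBmeas).aestronglyMeasurable)) ?_
        exact hh_bd _ hbd1
      have hmul : μ[E.indicator p * (B.indicator (fun _ => (1:ℝ))) | mX]
          =ᵐ[μ] E.indicator p * μ[B.indicator (fun _ => (1:ℝ)) | mX] :=
        condExp_mul_of_stronglyMeasurable_left hh_sm hint_h1B h1Bint
      have e1 : ∫ x, (E.indicator p * B.indicator (fun _ => (1:ℝ))) x ∂μ
          = ∫ x, (E.indicator p x * q x) ∂μ := by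
        rw [← integral_condExp hmX]
        exact integral_congr_ae hmul
      have e2 : ∫ x, (E.indicator p * B.indicator (fun _ => (1:ℝ))) x ∂μ
          = ∫ x in E, (p x * B.indicator (fun _ => (1:ℝ)) x) ∂μ := by
        rw [← integral_indicator hEmeas]
        congr 1
        funext x
        by_cases hx : x ∈ E <;> simp [Set.indicator_apply, hx]
      have e3 : ∫ x, (E.indicator p x * q x) ∂μ = ∫ x in E, (p x * q x) ∂μ := by
        rw [← integral_indicator hEmeas]
        congr 1
        funext x
        by_cases hx : x ∈ E <;> simp [Set.indicator_apply, hx]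
      have hLHS : ∫ x in E ∩ B, p x ∂μ
          = ∫ x in E, (p x * (B.indicator (fun _ => (1:ℝ)) x)) ∂μ := by
        rw [← setIntegral_indicator hBmeas]
        refine setIntegral_congr_ae hEmeas ?_
        filter_upwards with x _
        by_cases hx : x ∈ B <;> simp [Set.indicator_apply, hx]
      rw [hLHS, hRHS, ← e2, e1, e3]
      refine setIntegral_congr_ae hEmeas ?_
      filter_upwards with x _
      ring
    · -- complements
      intro t htm hind
      have htmeas : MeasurableSet[mΩ] t := hm' t htm
      have h1 := integral_add_compl htmeas (integrable_condExp : Integrable p μ)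
      have h2 := integral_add_compl htmeas hZint
      have h3 : ∫ x, p x ∂μ = ∫ x, Z x ∂μ := integral_condExp hmX
      linarith
    · -- disjoint unions
      intro f hdisj hfm hind
      have hfmeas : ∀ i, MeasurableSet[mΩ] (f i) := fun i => hm' _ (hfm i)
      rw [integral_iUnion hfmeas hdisj (integrable_condExp : Integrable p μ).integrableOn,
        integral_iUnion hfmeas hdisj hZint.integrableOn]
      exact tsum_congr hind
  refine (ae_eq_condExp_of_forall_setIntegral_eq hm' hZint
    (fun s _ _ => integrable_condExp.integrableOn) (fun s hs _ => key s hs) ?_).symm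
  exact ((stronglyMeasurable_condExp.mono
    (le_sup_left : mX ≤ mX ⊔ MeasurableSpace.comap W Real.measurableSpace))).aestronglyMeasurable

/-- Doubly robust property (correct propensity score): if `e(X) = P(Z=1|X)` a.s. (the
propensity model is correct) and `m₁(X)` is any bounded measurable function of `X`, then
`E[ Z·Y/e(X) − (Z−e(X))/e(X) · m₁(X) ] = E[Y(1)]`, regardless of whether `m₁(X)` equals
`E[Y|X,Z=1]`. -/
theorem stmt2
    {Ω : Type*} (mX : MeasurableSpace Ω) [mΩ : MeasurableSpace Ω] [StandardBorelSpace Ω]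
    (μ : Measure Ω) [IsProbabilityMeasure μ]
    (X : Ω → ℝ) (Y1 Y0 Z : Ω → ℝ)
    (hmX_def : mX = MeasurableSpace.comap X inferInstance)
    (hmX : mX ≤ mΩ)
    (hY1 : Integrable Y1 μ) (hY0 : Integrable Y0 μ)
    (hZmeas : Measurable Z) (hZbin : ∀ ω, Z ω = 0 ∨ Z ω = 1)
    -- unconfoundedness: (Y(1), Y(0)) ⊥ Z | X
    (hunconf : CondIndepFun mX hmX (fun ω => (Y1 ω, Y0 ω)) Z μ)
    -- positivity: 0 < P(Z=1|X) < 1 a.s.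
    (hpos : ∀ᵐ ω ∂μ, 0 < (μ[Z | mX]) ω ∧ (μ[Z | mX]) ω < 1)
    -- observed outcome
    (Y : Ω → ℝ) (hY : ∀ ω, Y ω = Z ω * Y1 ω + (1 - Z ω) * Y0 ω)
    -- propensity score model e(X), correctly specified: e(X) = P(Z=1|X) a.s.
    (e : Ω → ℝ) (hemeas : StronglyMeasurable[mX] e)
    (hcorrect : e =ᵐ[μ] μ[Z | mX])
    -- m₁(X): an arbitrary bounded (σ(X)-)measurable function
    (m1 : Ω → ℝ) (hm1meas : StronglyMeasurable[mX] m1)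
    (hm1bdd : ∃ C : ℝ, ∀ ω, |m1 ω| ≤ C)
    (hint : Integrable (fun ω => Z ω * Y ω / e ω - (Z ω - e ω) / e ω * m1 ω) μ) :
    ∫ ω, (Z ω * Y ω / e ω - (Z ω - e ω) / e ω * m1 ω) ∂μ = ∫ ω, Y1 ω ∂μ := by
  letI : MeasurableSpace Ω := mΩ
  have hZm : Measurable[mΩ] Z := hZmeas
  -- a measurable representative of Y1
  have hsm := hY1.aestronglyMeasurable
  set Y1' : Ω → ℝ := hsm.mk Y1 with hY1'_def
  have hY1'sm : StronglyMeasurable[mΩ] Y1' := hsm.stronglyMeasurable_mk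
  have hY1'm : Measurable[mΩ] Y1' := hY1'sm.measurable
  have hae : Y1 =ᵐ[μ] Y1' := hsm.ae_eq_mk
  -- transfer conditional independence to Y1'
  have hCI : CondIndepFun mX hmX Y1' Z μ := by
    have h0 : CondIndepFun mX hmX Y1 Z μ := by
      have h := Kernel.IndepFun.comp (φ := (Prod.fst : ℝ × ℝ → ℝ)) (ψ := (id : ℝ → ℝ))
        hunconf measurable_fst measurable_id
      exact h
    -- a.e. transfer
    set N : Set Ω := toMeasurable μ {ω | Y1 ω ≠ Y1' ω} with hN_def
    have hNmeas : MeasurableSet[mΩ] N := measurableSet_toMeasurable μ _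
    have hN0 : μ N = 0 := by
      rw [hN_def, measure_toMeasurable]
      exact ae_iff.mp hae
    have hker0 : ∀ᵐ ω ∂μ, condExpKernel μ mX ω N = 0 := by
      have h := condExpKernel_ae_eq_condExp (μ := μ) hmX hNmeas
      have hind0 : (N.indicator (fun _ => (1:ℝ))) =ᵐ[μ] 0 := by
        filter_upwards [measure_eq_zero_iff_ae_notMem.mp hN0] with ω hω
        simp [Set.indicator_of_notMem hω]
      have hcond0 : (μ⟦N | mX⟧) =ᵐ[μ] 0 :=
        (condExp_congr_ae hind0).trans (by rw [condExp_zero])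
      filter_upwards [h, hcond0] with ω h1 h2
      have h3 : (condExpKernel μ mX ω N).toReal = 0 := by
        show (condExpKernel μ mX ω).real N = 0
        rw [h1, h2]; rfl
      rcases ENNReal.toReal_eq_zero_iff _ |>.mp h3 with h4 | h4
      · exact h4
      · exact absurd h4 (measure_ne_top _ _)
    have htrim : ∀ᵐ ω ∂(μ.trim hmX), condExpKernel μ mX ω N = 0 := by
      rw [ae_iff]
      have hT : MeasurableSet[mX] {ω | ¬ condExpKernel μ mX ω N = 0} := by
        have : Measurable[mX] (fun ω => condExpKernel μ mX ω N) :=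
          measurable_condExpKernel hNmeas
        exact (this (measurableSet_singleton 0)).compl
      rw [trim_measurableSet_eq hmX hT]
      exact ae_iff.mp hker0
    have h1 : ∀ᵐ ω ∂(μ.trim hmX), Y1 =ᵐ[condExpKernel μ mX ω] Y1' := by
      filter_upwards [htrim] with ω hω
      refine ae_iff.mpr ?_
      refine measure_mono_null ?_ hω
      intro x hx
      exact subset_toMeasurable μ _ hx
    have h2 : ∀ᵐ ω ∂(μ.trim hmX), Z =ᵐ[condExpKernel μ mX ω] Z :=
      Filter.Eventually.of_forall fun ω => Filter.EventuallyEq.rfl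
    exact Kernel.IndepFun.congr' h0 h1 h2
  -- conditional expectation of Z given the join
  have hC : μ[Z | mX ⊔ MeasurableSpace.comap Y1' Real.measurableSpace] =ᵐ[μ] μ[Z | mX] :=
    condexp_sup_comap_of_condIndepFun mX μ hmX Y1' Z hY1'm hZm hZbin hCI
  have hmW : MeasurableSpace.comap Y1' Real.measurableSpace ≤ mΩ := hY1'm.comap_le
  have hm'le : mX ⊔ MeasurableSpace.comap Y1' Real.measurableSpace ≤ mΩ := sup_le hmX hmW
  -- the function G
  set G : Ω → ℝ := fun ω => (Y1' ω - m1 ω) / e ω with hG_def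
  have hG_sm : StronglyMeasurable[mX ⊔ MeasurableSpace.comap Y1' Real.measurableSpace] G := by
    have h1 : Measurable[MeasurableSpace.comap Y1' Real.measurableSpace] Y1' :=
      Measurable.of_comap_le le_rfl
    have h2 : Measurable[mX ⊔ MeasurableSpace.comap Y1' Real.measurableSpace] Y1' :=
      h1.mono le_sup_right le_rfl
    have h3 : Measurable[mX ⊔ MeasurableSpace.comap Y1' Real.measurableSpace] m1 :=
      hm1meas.measurable.mono le_sup_left le_rfl
    have h4 : Measurable[mX ⊔ MeasurableSpace.comap Y1' Real.measurableSpace] e :=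
      hemeas.measurable.mono le_sup_left le_rfl
    exact ((h2.sub h3).div h4).stronglyMeasurable
  -- integrability facts
  have hZint : Integrable Z μ := by
    refine Integrable.mono' (integrable_const (1 : ℝ)) (hZm.aestronglyMeasurable (μ := μ)) ?_
    filter_upwards with ω
    rcases hZbin ω with h | h <;> simp [h]
  obtain ⟨C, hCbd⟩ := hm1bdd
  have hm1int : Integrable m1 μ := by
    refine Integrable.mono' (integrable_const C) ((hm1meas.mono hmX).aestronglyMeasurable) ?_
    filter_upwards with ω
    rw [Real.norm_eq_abs]
    exact hCbd ω
  -- a.e. rewriting of the integrand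
  have hFeq : (fun ω => Z ω * Y ω / e ω - (Z ω - e ω) / e ω * m1 ω)
      =ᵐ[μ] fun ω => G ω * Z ω + m1 ω := by
    filter_upwards [hcorrect, hpos, hae] with ω hce hp hy
    have he0 : e ω ≠ 0 := by rw [hce]; exact ne_of_gt hp.1
    rw [hG_def]
    simp only
    rw [← hy, hY ω]
    rcases hZbin ω with h | h <;> rw [h] <;> field_simp <;> ring
  have hGZint : Integrable (fun ω => G ω * Z ω) μ := by
    have h1 : Integrable (fun ω => G ω * Z ω + m1 ω) μ := hint.congr hFeq
    have h2 := h1.sub hm1int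
    refine h2.congr ?_
    filter_upwards with ω
    simp only [Pi.sub_apply, hG_def]
    ring
  -- pull-out property
  have pull : μ[G * Z | mX ⊔ MeasurableSpace.comap Y1' Real.measurableSpace]
      =ᵐ[μ] G * μ[Z | mX ⊔ MeasurableSpace.comap Y1' Real.measurableSpace] :=
    condExp_mul_of_stronglyMeasurable_left hG_sm (by exact hGZint) hZint
  have chain : μ[G * Z | mX ⊔ MeasurableSpace.comap Y1' Real.measurableSpace]
      =ᵐ[μ] fun ω => Y1' ω - m1 ω := by
    filter_upwards [pull, hC, hcorrect, hpos] with ω h1 h2 h3 h4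
    have he0 : e ω ≠ 0 := by rw [h3]; exact ne_of_gt h4.1
    rw [h1]
    simp only [Pi.mul_apply, h2, ← h3, hG_def]
    field_simp
  have hGZ : ∫ ω, G ω * Z ω ∂μ = ∫ ω, (Y1' ω - m1 ω) ∂μ := by
    have h1 : ∫ ω, (G * Z) ω ∂μ = ∫ ω, G ω * Z ω ∂μ := rfl
    rw [← h1, ← integral_condExp hm'le (f := G * Z)]
    exact integral_congr_ae chain
  -- final computation
  rw [integral_congr_ae hFeq]
  rw [integral_add hGZint hm1int, hGZ,
    integral_sub (hY1.congr hae) hm1int]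
  rw [integral_congr_ae hae.symm]
  ring
end

section
/- The augmented IPW estimand with both models correct recovers the ATE: under unconfoundedness and positivity, with π(X)=P(Z=1|X), μ₁(X)=E[Y|X,Z=1], μ₀(X)=E[Y|X,Z=0], we have E[ Z·Y/π(X) − (Z−π(X))/π(X)·μ₁(X) − (1−Z)·Y/(1−π(X)) − (Z−π(X))/(1−π(X))·μ₀(X) ] = E[Y(1)−Y(0)]. -/
open MeasureTheory ProbabilityTheory

set_option maxHeartbeats 1000000
set_option synthInstance.maxHeartbeats 400000

lemma condexp_mul_of_condIndepFun
    {Ω : Type*} [mΩ : MeasurableSpace Ω] [StandardBorelSpace Ω]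
    (μ : Measure Ω) [IsProbabilityMeasure μ]
    (Z : Ω → ℝ) (hZmeas : Measurable Z) (hZbin : ∀ ω, Z ω = 0 ∨ Z ω = 1)
    {β : Type*} [mβ : MeasurableSpace β] (W : Ω → β) (hW : Measurable W)
    (mX : MeasurableSpace Ω) (hmX : mX ≤ mΩ)
    (hindep : CondIndepFun mX hmX W Z μ)
    {V : Ω → ℝ} (hVmeas : StronglyMeasurable[MeasurableSpace.comap W mβ] V)
    (hVint : Integrable V μ) :
    μ[fun ω => Z ω * V ω | mX] =ᵐ[μ] fun ω => (μ[Z | mX]) ω * (μ[V | mX]) ω := by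
  have hmV : MeasurableSpace.comap W mβ ≤ mΩ := hW.comap_le
  have hZA : Z = Set.indicator (Z ⁻¹' {1}) (fun _ => (1 : ℝ)) := by
    funext ω
    rcases hZbin ω with h | h <;>
      simp [Set.indicator_apply, Set.mem_preimage, h]
  have hZabs : ∀ ω, |Z ω| ≤ 1 := by
    intro ω; rcases hZbin ω with h | h <;> simp [h]
  have hZint : Integrable Z μ := by
    refine (integrable_const (1 : ℝ)).mono' (hZmeas.aestronglyMeasurable (μ := μ)) ?_
    exact ae_of_all μ fun ω => by simpa [Real.norm_eq_abs] using hZabs ω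
  have hπbdd : ∀ᵐ ω ∂μ, |(μ[Z | mX]) ω| ≤ 1 := by
    have h0 : 0 ≤ᵐ[μ] μ[Z | mX] :=
      condExp_nonneg (ae_of_all μ fun ω => by rcases hZbin ω with h | h <;> simp [h])
    have h1 : μ[Z | mX] ≤ᵐ[μ] μ[fun _ => (1 : ℝ) | mX] :=
      condExp_mono hZint (integrable_const 1)
        (ae_of_all μ fun ω => by rcases hZbin ω with h | h <;> simp [h])
    have h2 : μ[fun _ => (1 : ℝ) | mX] = fun _ => (1 : ℝ) := condExp_const hmX 1
    rw [h2] at h1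
    filter_upwards [h0, h1] with ω e0 e1
    simp only [Pi.zero_apply] at e0
    rw [abs_le]
    exact ⟨by linarith, e1⟩
  have hbase := (condIndepFun_iff_condExp_inter_preimage_eq_mul
    (hm' := hmX) (μ := μ) hW hZmeas).mp hindep
  set P : (Ω → ℝ) → Prop := fun f =>
    μ[fun ω => Z ω * f ω | mX] =ᵐ[μ] fun ω => (μ[Z | mX]) ω * (μ[f | mX]) ω with hP_def
  have hZmul_int : ∀ {f : Ω → ℝ}, Integrable f μ → Integrable (fun ω => Z ω * f ω) μ := by
    intro f hf
    refine hf.abs.mono' ((hZmeas.aestronglyMeasurable (μ := μ)).mul hf.1) ?_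
    refine ae_of_all μ fun ω => ?_
    rw [Real.norm_eq_abs, abs_mul]
    calc |Z ω| * |f ω| ≤ 1 * |f ω| :=
          mul_le_mul_of_nonneg_right (hZabs ω) (abs_nonneg _)
      _ = |f ω| := one_mul _
  have main : ∀ ⦃f : Ω → ℝ⦄, Integrable f (μ.trim hmV) → P f := by
    refine @Integrable.induction Ω ℝ (MeasurableSpace.comap W mβ) _ (μ.trim hmV) P ?_ ?_ ?_ ?_
    · -- indicators
      rintro c s ⟨s', hs', rfl⟩ _
      have hb := hbase s' {1} hs' (measurableSet_singleton 1)
      have h1 : (fun ω => Z ω * Set.indicator (W ⁻¹' s') (fun _ => c) ω)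
          = c • Set.indicator (W ⁻¹' s' ∩ Z ⁻¹' {1}) (fun _ => (1 : ℝ)) := by
        funext ω
        rcases hZbin ω with h | h <;>
          by_cases hω : ω ∈ W ⁻¹' s' <;>
            simp [Set.indicator_apply, hω, h, Set.mem_preimage]
      have h2 : Set.indicator (W ⁻¹' s') (fun _ => c)
          = c • Set.indicator (W ⁻¹' s') (fun _ => (1 : ℝ)) := by
        funext ω; by_cases hω : ω ∈ W ⁻¹' s' <;> simp [Set.indicator_apply, hω]
      rw [hP_def]
      simp only
      rw [h1, h2]
      have e1 := condExp_smul (μ := μ) (m := mX) c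
        (Set.indicator (W ⁻¹' s' ∩ Z ⁻¹' {1}) (fun _ => (1 : ℝ)))
      have e2 := condExp_smul (μ := μ) (m := mX) c
        (Set.indicator (W ⁻¹' s') (fun _ => (1 : ℝ)))
      have hπA : μ[Z | mX] =ᵐ[μ] μ⟦Z ⁻¹' {1} | mX⟧ := by
        rw [← hZA]
      filter_upwards [e1, e2, hb, hπA] with ω w1 w2 w3 w4
      simp only [Pi.smul_apply, smul_eq_mul] at w1 w2 ⊢
      rw [w1, w3, w2, w4]
      ring
    · -- additivity
      intro f g _ hf hg hPf hPg
      have hf' : Integrable f μ := integrable_of_integrable_trim hmV hf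
      have hg' : Integrable g μ := integrable_of_integrable_trim hmV hg
      have h1 : (fun ω => Z ω * (f + g) ω)
          = (fun ω => Z ω * f ω) + fun ω => Z ω * g ω := by
        funext ω; simp [mul_add]
      rw [hP_def]
      simp only
      rw [h1]
      have e1 := condExp_add (hZmul_int hf') (hZmul_int hg') (m := mX)
      have e2 := condExp_add hf' hg' (m := mX)
      filter_upwards [e1, e2, hPf, hPg] with ω w1 w2 w3 w4
      simp only [Pi.add_apply] at w1 w2 ⊢
      rw [w1, w2, w3, w4]
      ring
    · -- closedness in L¹(μ.trim hmV)
      refine IsSeqClosed.isClosed ?_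
      intro fs f hfs hf_tendsto
      simp only [Set.mem_setOf_eq, hP_def] at hfs ⊢
      have hint : ∀ (g : Lp ℝ 1 (μ.trim hmV)), Integrable (⇑g) μ := fun g =>
        integrable_of_integrable_trim hmV (L1.integrable_coeFn g)
      set d : ℕ → ℝ := fun n => ∫ ω, ‖(f : Ω → ℝ) ω - fs n ω‖ ∂μ with hd_def
      have hd0 : Filter.Tendsto d Filter.atTop (nhds 0) := by
        have h1 : ∀ n, d n = dist (fs n) f := by
          intro n
          have hasm : AEStronglyMeasurable[MeasurableSpace.comap W mβ] (fun a => ‖(f : Ω → ℝ) a - fs n a‖)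
              (μ.trim hmV) :=
            ((Lp.aestronglyMeasurable f).sub (Lp.aestronglyMeasurable (fs n))).norm
          calc d n = ∫ a, ‖(f : Ω → ℝ) a - fs n a‖ ∂(μ.trim hmV) :=
                integral_trim_ae hmV hasm
            _ = ∫ a, dist (fs n a) (f a) ∂(μ.trim hmV) :=
                integral_congr_ae (ae_of_all _ fun a => by
                  show ‖(f : Ω → ℝ) a - fs n a‖ = dist ((fs n : Ω → ℝ) a) ((f : Ω → ℝ) a)
                  rw [dist_eq_norm]
                  exact (norm_sub_rev _ _).symm)
            _ = dist (fs n) f := (L1.dist_eq_integral_dist _ _).symm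
        rw [show d = fun n => dist (fs n) f from funext h1]
        exact tendsto_iff_dist_tendsto_zero.mp hf_tendsto
      set G : Ω → ℝ := μ[fun ω => Z ω * (f : Ω → ℝ) ω | mX] with hG_def
      set H : Ω → ℝ := fun ω => (μ[Z | mX]) ω * (μ[(f : Ω → ℝ) | mX]) ω with hH_def
      have hHint : Integrable H μ := by
        refine (integrable_condExp (m := mX) (f := (f : Ω → ℝ))).abs.mono'
          (((stronglyMeasurable_condExp.mono hmX).aestronglyMeasurable.mul
            (stronglyMeasurable_condExp.mono hmX).aestronglyMeasurable)) ?_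
        filter_upwards [hπbdd] with ω hb
        rw [hH_def]
        simp only [Real.norm_eq_abs, abs_mul]
        calc |(μ[Z|mX]) ω| * |(μ[(f : Ω → ℝ)|mX]) ω|
            ≤ 1 * |(μ[(f : Ω → ℝ)|mX]) ω| :=
              mul_le_mul_of_nonneg_right hb (abs_nonneg _)
          _ = |(μ[(f : Ω → ℝ)|mX]) ω| := one_mul _
      have key : ∀ n, ∫ ω, ‖G ω - H ω‖ ∂μ ≤ 2 * d n := by
        intro n
        set Gn : Ω → ℝ := μ[fun ω => Z ω * (fs n : Ω → ℝ) ω | mX] with hGn_def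
        set Hn : Ω → ℝ := fun ω => (μ[Z | mX]) ω * (μ[(fs n : Ω → ℝ) | mX]) ω
          with hHn_def
        have hDint : Integrable (fun ω => Z ω * (f : Ω → ℝ) ω
            - Z ω * (fs n : Ω → ℝ) ω) μ :=
          (hZmul_int (hint f)).sub (hZmul_int (hint (fs n)))
        have hdiffint : Integrable (fun ω => (f : Ω → ℝ) ω - (fs n : Ω → ℝ) ω) μ :=
          (hint f).sub (hint (fs n))
        have e1 : ∫ ω, ‖G ω - Gn ω‖ ∂μ ≤ d n := by
          have hsub : (fun ω => G ω - Gn ω) =ᵐ[μ]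
              μ[(fun ω => Z ω * (f : Ω → ℝ) ω) - (fun ω => Z ω * (fs n : Ω → ℝ) ω) | mX] := by
            filter_upwards [condExp_sub (μ := μ) (m := mX) (hZmul_int (hint f))
              (hZmul_int (hint (fs n)))] with ω hω
            rw [hω]; rfl
          calc ∫ ω, ‖G ω - Gn ω‖ ∂μ
              = ∫ ω, |(μ[(fun ω => Z ω * (f : Ω → ℝ) ω)
                  - (fun ω => Z ω * (fs n : Ω → ℝ) ω) | mX]) ω| ∂μ := by
                refine integral_congr_ae ?_
                filter_upwards [hsub] with ω hω
                rw [Real.norm_eq_abs, hω]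
            _ ≤ ∫ ω, |((fun ω => Z ω * (f : Ω → ℝ) ω)
                  - (fun ω => Z ω * (fs n : Ω → ℝ) ω)) ω| ∂μ :=
                integral_abs_condExp_le _
            _ ≤ d n := by
                rw [hd_def]
                refine integral_mono_ae ?_ hdiffint.norm ?_
                · exact (Integrable.congr hDint (ae_of_all _ fun ω => rfl)).abs
                · refine ae_of_all _ fun ω => ?_
                  simp only [Pi.sub_apply, Real.norm_eq_abs]
                  rw [← mul_sub, abs_mul]
                  calc |Z ω| * |(f : Ω → ℝ) ω - (fs n : Ω → ℝ) ω|
                      ≤ 1 * |(f : Ω → ℝ) ω - (fs n : Ω → ℝ) ω| :=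
                        mul_le_mul_of_nonneg_right (hZabs ω) (abs_nonneg _)
                    _ = |(f : Ω → ℝ) ω - (fs n : Ω → ℝ) ω| := one_mul _
        have e2 : ∫ ω, ‖H ω - Hn ω‖ ∂μ ≤ d n := by
          have hsub : μ[(f : Ω → ℝ) | mX] - μ[(fs n : Ω → ℝ) | mX] =ᵐ[μ]
              μ[(f : Ω → ℝ) - (fs n : Ω → ℝ) | mX] :=
            (condExp_sub (hint f) (hint (fs n)) mX).symm
          have hHmeas : AEStronglyMeasurable[mΩ] (fun ω => H ω - Hn ω) μ := by
            refine AEStronglyMeasurable.sub ?_ ?_ <;>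
              exact (stronglyMeasurable_condExp.mono hmX).aestronglyMeasurable.mul
                (stronglyMeasurable_condExp.mono hmX).aestronglyMeasurable
          have hbd : ∀ᵐ ω ∂μ, ‖H ω - Hn ω‖
              ≤ |(μ[(f : Ω → ℝ) - (fs n : Ω → ℝ) | mX]) ω| := by
            filter_upwards [hπbdd, hsub] with ω hb hs
            rw [hH_def, hHn_def]
            simp only [Real.norm_eq_abs]
            rw [← mul_sub, abs_mul]
            have : (μ[(f : Ω → ℝ)|mX]) ω - (μ[(fs n : Ω → ℝ)|mX]) ω
                = (μ[(f : Ω → ℝ) - (fs n : Ω → ℝ) | mX]) ω := by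
              rw [← hs]; rfl
            rw [this]
            calc |(μ[Z|mX]) ω| * |(μ[(f : Ω → ℝ) - (fs n : Ω → ℝ)|mX]) ω|
                ≤ 1 * |(μ[(f : Ω → ℝ) - (fs n : Ω → ℝ)|mX]) ω| :=
                  mul_le_mul_of_nonneg_right hb (abs_nonneg _)
              _ = _ := one_mul _
          have hHHn : Integrable (fun ω => H ω - Hn ω) μ :=
            (integrable_condExp (m := mX)).abs.mono' hHmeas hbd
          calc ∫ ω, ‖H ω - Hn ω‖ ∂μ
              ≤ ∫ ω, |(μ[(f : Ω → ℝ) - (fs n : Ω → ℝ) | mX]) ω| ∂μ :=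
                integral_mono_ae hHHn.norm (integrable_condExp (m := mX)).abs hbd
            _ ≤ ∫ ω, |((f : Ω → ℝ) - (fs n : Ω → ℝ)) ω| ∂μ :=
                integral_abs_condExp_le _
            _ = d n := by
                rw [hd_def]
                exact integral_congr_ae (ae_of_all _ fun ω => by
                  simp [Real.norm_eq_abs])
        have hGHint : Integrable (fun ω => G ω - H ω) μ := (integrable_condExp (m := mX)).sub hHint
        have hGGn : Integrable (fun ω => G ω - Gn ω) μ :=
          (integrable_condExp (m := mX)).sub (integrable_condExp (m := mX))
        have hHHn : Integrable (fun ω => H ω - Hn ω) μ := by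
          have h1 : Integrable Hn μ := by
            refine (integrable_condExp (m := mX) (f := ((fs n : Ω → ℝ)))).abs.mono'
              ((stronglyMeasurable_condExp.mono hmX).aestronglyMeasurable.mul
                (stronglyMeasurable_condExp.mono hmX).aestronglyMeasurable) ?_
            filter_upwards [hπbdd] with ω hb
            rw [hHn_def]
            simp only [Real.norm_eq_abs, abs_mul]
            calc |(μ[Z|mX]) ω| * |(μ[(fs n : Ω → ℝ)|mX]) ω|
                ≤ 1 * |(μ[(fs n : Ω → ℝ)|mX]) ω| :=
                  mul_le_mul_of_nonneg_right hb (abs_nonneg _)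
              _ = _ := one_mul _
          exact hHint.sub h1
        calc ∫ ω, ‖G ω - H ω‖ ∂μ
            ≤ ∫ ω, (‖G ω - Gn ω‖ + ‖H ω - Hn ω‖) ∂μ := by
              refine integral_mono_ae hGHint.norm (hGGn.norm.add hHHn.norm) ?_
              filter_upwards [hfs n] with ω hω
              have : G ω - H ω = (G ω - Gn ω) - (H ω - Hn ω) := by
                rw [hGn_def, hHn_def]
                have : Gn ω = Hn ω := hω
                rw [hGn_def, hHn_def] at this
                simp only
                rw [this]
                ring
              rw [this]
              exact norm_sub_le _ _
          _ = ∫ ω, ‖G ω - Gn ω‖ ∂μ + ∫ ω, ‖H ω - Hn ω‖ ∂μ :=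
              integral_add hGGn.norm hHHn.norm
          _ ≤ d n + d n := add_le_add e1 e2
          _ = 2 * d n := by ring
      have hI0 : ∫ ω, ‖G ω - H ω‖ ∂μ = 0 := by
        have hle : ∫ ω, ‖G ω - H ω‖ ∂μ ≤ 0 := by
          have h2d : Filter.Tendsto (fun n => 2 * d n) Filter.atTop (nhds 0) := by
            simpa using hd0.const_mul (2 : ℝ)
          exact ge_of_tendsto' h2d key
        have hge : 0 ≤ ∫ ω, ‖G ω - H ω‖ ∂μ :=
          integral_nonneg fun ω => norm_nonneg _
        linarith
      have hGHint : Integrable (fun ω => G ω - H ω) μ := (integrable_condExp (m := mX)).sub hHint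
      have := (integral_eq_zero_iff_of_nonneg_ae
        (ae_of_all μ fun ω => norm_nonneg (G ω - H ω)) hGHint.norm).mp hI0
      filter_upwards [this] with ω hω
      have : ‖G ω - H ω‖ = 0 := hω
      have := norm_eq_zero.mp this
      have := sub_eq_zero.mp this
      exact this
    · -- a.e. congruence
      intro f g hfg hf hPf
      have hfgμ : f =ᵐ[μ] g := ae_eq_of_ae_eq_trim hfg
      rw [hP_def]
      have e1 : μ[fun ω => Z ω * f ω | mX] =ᵐ[μ] μ[fun ω => Z ω * g ω | mX] :=
        condExp_congr_ae (hfgμ.mono fun ω h => by simp [h])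
      have e2 : μ[f | mX] =ᵐ[μ] μ[g | mX] := condExp_congr_ae hfgμ
      filter_upwards [e1, e2, hPf] with ω w1 w2 w3
      rw [← w1, w3, w2]
  exact main (hVint.trim hmV hVmeas)

/-- The augmented IPW estimand with both models correct recovers the ATE: under
unconfoundedness and positivity, with `π(X)=P(Z=1|X)`, `μ₁(X)=E[Y|X,Z=1]`,
`μ₀(X)=E[Y|X,Z=0]`, we have
`E[ Z·Y/π(X) − (Z−π(X))/π(X)·μ₁(X) − (1−Z)·Y/(1−π(X)) − (Z−π(X))/(1−π(X))·μ₀(X) ]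
  = E[Y(1)−Y(0)]`.
Here `μ₁` (resp. `μ₀`) is characterized as the `σ(X)`-measurable function with
`μ₁ · π = E[Z·Y|X]` (resp. `μ₀ · (1−π) = E[(1−Z)·Y|X]`) a.e. -/
theorem stmt4
    {Ω : Type*} (mX : MeasurableSpace Ω) [mΩ : MeasurableSpace Ω] [StandardBorelSpace Ω]
    (μ : Measure Ω) [IsProbabilityMeasure μ]
    (X : Ω → ℝ) (Y1 Y0 Z : Ω → ℝ)
    (hmX_def : mX = MeasurableSpace.comap X inferInstance)
    (hmX : mX ≤ mΩ)
    (hY1 : Integrable Y1 μ) (hY0 : Integrable Y0 μ)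
    (hZmeas : Measurable Z) (hZbin : ∀ ω, Z ω = 0 ∨ Z ω = 1)
    -- unconfoundedness: (Y(1), Y(0)) ⊥ Z | X
    (hunconf : CondIndepFun mX hmX (fun ω => (Y1 ω, Y0 ω)) Z μ)
    -- positivity: 0 < π(X) < 1 a.s., π := E[Z|X]
    (π : Ω → ℝ) (hπ : π = μ[Z | mX])
    (hpos : ∀ᵐ ω ∂μ, 0 < π ω ∧ π ω < 1)
    -- observed outcome
    (Y : Ω → ℝ) (hY : ∀ ω, Y ω = Z ω * Y1 ω + (1 - Z ω) * Y0 ω)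
    -- μ₁(X) = E[Y|X,Z=1] and μ₀(X) = E[Y|X,Z=0]
    (μ1 μ0 : Ω → ℝ)
    (hμ1meas : StronglyMeasurable[mX] μ1) (hμ0meas : StronglyMeasurable[mX] μ0)
    (hμ1int : Integrable μ1 μ) (hμ0int : Integrable μ0 μ)
    (hμ1 : (fun ω => μ1 ω * π ω) =ᵐ[μ] μ[fun ω => Z ω * Y ω | mX])
    (hμ0 : (fun ω => μ0 ω * (1 - π ω)) =ᵐ[μ] μ[fun ω => (1 - Z ω) * Y ω | mX])
    (hint : Integrable (fun ω => Z ω * Y ω / π ω - (Z ω - π ω) / π ω * μ1 ω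
      - (1 - Z ω) * Y ω / (1 - π ω) - (Z ω - π ω) / (1 - π ω) * μ0 ω) μ) :
    ∫ ω, (Z ω * Y ω / π ω - (Z ω - π ω) / π ω * μ1 ω
      - (1 - Z ω) * Y ω / (1 - π ω) - (Z ω - π ω) / (1 - π ω) * μ0 ω) ∂μ
      = ∫ ω, (Y1 ω - Y0 ω) ∂μ := by
  have hZm : Measurable[mΩ] Z := hZmeas
  have hZabs : ∀ ω, |Z ω| ≤ 1 := by
    intro ω; rcases hZbin ω with h | h <;> simp [h]
  have hZint : Integrable Z μ := by
    refine (integrable_const (1 : ℝ)).mono' (hZm.aestronglyMeasurable (μ := μ)) ?_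
    exact ae_of_all μ fun ω => by simpa [Real.norm_eq_abs] using hZabs ω
  -- measurable versions of Y1 Y0
  obtain ⟨Y1', hY1'sm, hY1'e⟩ : ∃ g, StronglyMeasurable[mΩ] g ∧ Y1 =ᵐ[μ] g :=
    ⟨hY1.1.mk Y1, hY1.1.stronglyMeasurable_mk, hY1.1.ae_eq_mk⟩
  obtain ⟨Y0', hY0'sm, hY0'e⟩ : ∃ g, StronglyMeasurable[mΩ] g ∧ Y0 =ᵐ[μ] g :=
    ⟨hY0.1.mk Y0, hY0.1.stronglyMeasurable_mk, hY0.1.ae_eq_mk⟩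
  set W : Ω → ℝ × ℝ := fun ω => (Y1' ω, Y0' ω) with hW_def
  have hWmeas : Measurable[mΩ] W := hY1'sm.measurable.prodMk hY0'sm.measurable
  -- transfer conditional independence to the measurable versions
  have hpair : (fun ω => (Y1 ω, Y0 ω)) =ᵐ[μ] W := by
    filter_upwards [hY1'e, hY0'e] with ω h1 h2
    rw [hW_def]; simp [h1, h2]
  have hN : μ {ω | ¬ (Y1 ω, Y0 ω) = W ω} = 0 := ae_iff.mp hpair
  obtain ⟨N, hNsub, hNmeas, hN0⟩ := @exists_measurable_superset_of_null Ω mΩ μ _ hN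
  have hker0 : ∀ᵐ ω ∂μ, condExpKernel (mΩ := mΩ) μ mX ω N = 0 := by
    have h1 := condExpKernel_ae_eq_condExp (mΩ := mΩ) (μ := μ) hmX hNmeas
    have h2 : (μ⟦N | mX⟧) =ᵐ[μ] (0 : Ω → ℝ) := by
      have hnot : ∀ᵐ ω ∂μ, ω ∉ N := by
        rw [ae_iff]; simpa using hN0
      have hind : N.indicator (fun _ => (1 : ℝ)) =ᵐ[μ] (0 : Ω → ℝ) := by
        filter_upwards [hnot] with ω hω
        simp [Set.indicator_of_notMem hω]
      calc (μ⟦N | mX⟧) =ᵐ[μ] μ[(0 : Ω → ℝ) | mX] := condExp_congr_ae hind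
        _ = (0 : Ω → ℝ) := condExp_zero
    filter_upwards [h1, h2] with ω e1 e2
    have : (condExpKernel (mΩ := mΩ) μ mX ω).real N = 0 := by rw [e1, e2]; rfl
    rcases ENNReal.toReal_eq_zero_iff _ |>.mp this with h | h
    · exact h
    · exact absurd h (measure_ne_top _ _)
  have hker0' : ∀ᵐ ω ∂(μ.trim hmX), condExpKernel (mΩ := mΩ) μ mX ω N = 0 := by
    have hms : MeasurableSet[mX] {ω | condExpKernel (mΩ := mΩ) μ mX ω N = 0} :=
      measurable_condExpKernel (mΩ := mΩ) (m := mX) hNmeas (measurableSet_singleton 0)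
    rw [ae_iff]
    rw [show {ω | ¬ condExpKernel (mΩ := mΩ) μ mX ω N = 0}
        = {ω | condExpKernel (mΩ := mΩ) μ mX ω N = 0}ᶜ from rfl]
    rw [trim_measurableSet_eq hmX hms.compl]
    exact ae_iff.mp hker0
  have hunconf' : CondIndepFun mX hmX W Z μ := by
    refine Kernel.IndepFun.congr' hunconf ?_ ?_
    · filter_upwards [hker0'] with ω hω
      refine ae_iff.mpr ?_
      exact measure_mono_null (fun ω' hω' => hNsub hω') hω
    · exact Filter.Eventually.of_forall fun ω => Filter.EventuallyEq.rfl
  -- factorization for Y1' and Y0'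
  have hWcm : Measurable[MeasurableSpace.comap W inferInstance] W :=
    comap_measurable W
  have hY1'cm : StronglyMeasurable[MeasurableSpace.comap W inferInstance] Y1' :=
    (measurable_fst.comp hWcm).stronglyMeasurable
  have hY0'cm : StronglyMeasurable[MeasurableSpace.comap W inferInstance] Y0' :=
    (measurable_snd.comp hWcm).stronglyMeasurable
  have key1 := condexp_mul_of_condIndepFun (mΩ := mΩ) μ Z hZm hZbin W hWmeas mX hmX hunconf'
    hY1'cm (hY1.congr hY1'e)
  have key0 := condexp_mul_of_condIndepFun (mΩ := mΩ) μ Z hZm hZbin W hWmeas mX hmX hunconf'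
    hY0'cm (hY0.congr hY0'e)
  rw [← hπ] at key1 key0
  -- identities for the observed outcome
  have hZY : (fun ω => Z ω * Y ω) = fun ω => Z ω * Y1 ω := by
    funext ω; rcases hZbin ω with h | h <;> simp [hY ω, h]
  have h1ZY : (fun ω => (1 - Z ω) * Y ω) = fun ω => (1 - Z ω) * Y0 ω := by
    funext ω; rcases hZbin ω with h | h <;> simp [hY ω, h]
  -- μ1 = E[Y1'|X] a.e.
  have chain1 : (fun ω => μ1 ω * π ω) =ᵐ[μ] fun ω => π ω * (μ[Y1' | mX]) ω := by
    refine hμ1.trans ?_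
    rw [hZY]
    refine (condExp_congr_ae (m := mX) ?_).trans key1
    filter_upwards [hY1'e] with ω h; rw [h]
  have hμ1eq : μ1 =ᵐ[μ] μ[Y1' | mX] := by
    filter_upwards [chain1, hpos] with ω h1 h2
    have hne : π ω ≠ 0 := ne_of_gt h2.1
    have : μ1 ω * π ω = (μ[Y1' | mX]) ω * π ω := by rw [h1]; ring
    exact mul_right_cancel₀ hne this
  have hintμ1 : ∫ ω, μ1 ω ∂μ = ∫ ω, Y1 ω ∂μ := by
    calc ∫ ω, μ1 ω ∂μ = ∫ ω, (μ[Y1' | mX]) ω ∂μ := integral_congr_ae hμ1eq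
      _ = ∫ ω, Y1' ω ∂μ := integral_condExp hmX
      _ = ∫ ω, Y1 ω ∂μ := integral_congr_ae hY1'e.symm
  -- μ0 = E[Y0'|X] a.e.
  have hY0'int : Integrable Y0' μ := hY0.congr hY0'e
  have hZY0'int : Integrable (fun ω => Z ω * Y0' ω) μ := by
    refine hY0'int.abs.mono' ((hZm.aestronglyMeasurable (μ := μ)).mul hY0'int.1) ?_
    refine ae_of_all μ fun ω => ?_
    rw [Real.norm_eq_abs, abs_mul]
    calc |Z ω| * |Y0' ω| ≤ 1 * |Y0' ω| :=
          mul_le_mul_of_nonneg_right (hZabs ω) (abs_nonneg _)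
      _ = |Y0' ω| := one_mul _
  have chain0 : (fun ω => μ0 ω * (1 - π ω)) =ᵐ[μ]
      fun ω => (1 - π ω) * (μ[Y0' | mX]) ω := by
    refine hμ0.trans ?_
    rw [h1ZY]
    have e1 : μ[fun ω => (1 - Z ω) * Y0 ω | mX]
        =ᵐ[μ] μ[fun ω => Y0' ω - Z ω * Y0' ω | mX] := by
      refine condExp_congr_ae (m := mX) ?_
      filter_upwards [hY0'e] with ω h; rw [h]; ring
    refine e1.trans ?_
    have e2 : μ[fun ω => Y0' ω - Z ω * Y0' ω | mX]
        =ᵐ[μ] μ[Y0' | mX] - μ[fun ω => Z ω * Y0' ω | mX] := by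
      refine (condExp_congr_ae (m := mX)
        (ae_of_all μ fun ω => rfl)).trans (condExp_sub hY0'int hZY0'int mX)
    refine e2.trans ?_
    filter_upwards [key0] with ω h
    simp only [Pi.sub_apply]
    rw [h]; ring
  have hμ0eq : μ0 =ᵐ[μ] μ[Y0' | mX] := by
    filter_upwards [chain0, hpos] with ω h1 h2
    have hne : (1 : ℝ) - π ω ≠ 0 := ne_of_gt (by linarith [h2.2])
    have : μ0 ω * (1 - π ω) = (μ[Y0' | mX]) ω * (1 - π ω) := by rw [h1]; ring
    exact mul_right_cancel₀ hne this
  have hintμ0 : ∫ ω, μ0 ω ∂μ = ∫ ω, Y0 ω ∂μ := by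
    calc ∫ ω, μ0 ω ∂μ = ∫ ω, (μ[Y0' | mX]) ω ∂μ := integral_congr_ae hμ0eq
      _ = ∫ ω, Y0' ω ∂μ := integral_condExp hmX
      _ = ∫ ω, Y0 ω ∂μ := integral_congr_ae hY0'e.symm
  -- measurability facts
  have hπm : StronglyMeasurable[mX] π := by
    rw [hπ]; exact stronglyMeasurable_condExp
  have hπam : AEMeasurable π μ :=
    ((hπm.mono hmX).aestronglyMeasurable (μ := μ)).aemeasurable
  have hμ1am : AEMeasurable μ1 μ :=
    ((hμ1meas.mono hmX).aestronglyMeasurable (μ := μ)).aemeasurable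
  have hμ0am : AEMeasurable μ0 μ :=
    ((hμ0meas.mono hmX).aestronglyMeasurable (μ := μ)).aemeasurable
  have hYam : AEMeasurable Y μ := by
    have hYfun : Y = fun ω => Z ω * Y1 ω + (1 - Z ω) * Y0 ω := funext hY
    rw [hYfun]
    exact (hZm.aemeasurable.mul hY1.1.aemeasurable).add
      ((aemeasurable_const.sub hZm.aemeasurable).mul hY0.1.aemeasurable)
  -- the augmentation terms
  set A : Ω → ℝ := fun ω => Z ω * (Y ω - μ1 ω) / π ω with hA_def
  set B : Ω → ℝ := fun ω => (1 - Z ω) * (Y ω - μ0 ω) / (1 - π ω) with hB_def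
  have hAam : AEMeasurable A μ :=
    (hZm.aemeasurable.mul (hYam.sub hμ1am)).div hπam
  have hBam : AEMeasurable B μ :=
    ((aemeasurable_const.sub hZm.aemeasurable).mul (hYam.sub hμ0am)).div
      (aemeasurable_const.sub hπam)
  have hIeq : (fun ω => Z ω * Y ω / π ω - (Z ω - π ω) / π ω * μ1 ω
      - (1 - Z ω) * Y ω / (1 - π ω) - (Z ω - π ω) / (1 - π ω) * μ0 ω)
      =ᵐ[μ] fun ω => A ω + μ1 ω - B ω - μ0 ω := by
    filter_upwards [hpos] with ω h
    have h1 : π ω ≠ 0 := ne_of_gt h.1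
    have h2 : (1 : ℝ) - π ω ≠ 0 := ne_of_gt (by linarith [h.2])
    rw [hA_def, hB_def]
    simp only
    field_simp
    ring
  have hABdiff : Integrable (fun ω => A ω - B ω) μ := by
    refine Integrable.congr ((hint.sub hμ1int).add hμ0int) ?_
    filter_upwards [hIeq] with ω h
    simp only [Pi.add_apply, Pi.sub_apply]
    rw [h]
    ring
  have hAabs_le : ∀ ω, |A ω| ≤ |A ω - B ω| := by
    intro ω
    rcases hZbin ω with h | h
    · have hA0 : A ω = 0 := by rw [hA_def]; simp [h]
      rw [hA0]; simp [abs_nonneg]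
    · have hB0 : B ω = 0 := by rw [hB_def]; simp [h]
      rw [hB0, sub_zero]
  have hBabs_le : ∀ ω, |B ω| ≤ |A ω - B ω| := by
    intro ω
    rcases hZbin ω with h | h
    · have hA0 : A ω = 0 := by rw [hA_def]; simp [h]
      rw [hA0, zero_sub, abs_neg]
    · have hB0 : B ω = 0 := by rw [hB_def]; simp [h]
      rw [hB0]; simp [abs_nonneg]
  have hAint : Integrable A μ := by
    refine hABdiff.abs.mono' hAam.aestronglyMeasurable ?_
    exact ae_of_all μ fun ω => by rw [Real.norm_eq_abs]; exact hAabs_le ω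
  have hBint : Integrable B μ := by
    refine hABdiff.abs.mono' hBam.aestronglyMeasurable ?_
    exact ae_of_all μ fun ω => by rw [Real.norm_eq_abs]; exact hBabs_le ω
  -- ∫ A = 0
  have hZYint : Integrable (fun ω => Z ω * Y ω) μ := by
    rw [hZY]
    refine hY1.abs.mono'
      ((hZm.aemeasurable.mul hY1.1.aemeasurable).aestronglyMeasurable) ?_
    refine ae_of_all μ fun ω => ?_
    rw [Real.norm_eq_abs, abs_mul]
    calc |Z ω| * |Y1 ω| ≤ 1 * |Y1 ω| :=
          mul_le_mul_of_nonneg_right (hZabs ω) (abs_nonneg _)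
      _ = |Y1 ω| := one_mul _
  have hμ1Zint : Integrable (fun ω => μ1 ω * Z ω) μ := by
    refine hμ1int.abs.mono' ((hμ1am.mul hZm.aemeasurable).aestronglyMeasurable) ?_
    refine ae_of_all μ fun ω => ?_
    rw [Real.norm_eq_abs, abs_mul]
    calc |μ1 ω| * |Z ω| ≤ |μ1 ω| * 1 :=
          mul_le_mul_of_nonneg_left (hZabs ω) (abs_nonneg _)
      _ = |μ1 ω| := mul_one _
  set g1 : Ω → ℝ := fun ω => Z ω * Y ω - μ1 ω * Z ω with hg1_def
  have hg1int : Integrable g1 μ := hZYint.sub hμ1Zint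
  have hA_eq : A = fun ω => (π ω)⁻¹ * g1 ω := by
    funext ω; rw [hA_def, hg1_def]; simp only
    rw [div_eq_mul_inv]; ring
  have hμ1Zcond : μ[fun ω => μ1 ω * Z ω | mX] =ᵐ[μ] fun ω => μ1 ω * π ω := by
    have h := condExp_mul_of_stronglyMeasurable_left (m := mX) hμ1meas
      (show Integrable (μ1 * Z) μ from hμ1Zint) hZint
    rw [← hπ] at h
    exact (condExp_congr_ae (m := mX) (ae_of_all μ fun ω => rfl)).trans
      (h.trans (ae_of_all μ fun ω => rfl))
  have hg1cond : μ[g1 | mX] =ᵐ[μ] 0 := by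
    have e1 : μ[g1 | mX] =ᵐ[μ]
        μ[fun ω => Z ω * Y ω | mX] - μ[fun ω => μ1 ω * Z ω | mX] :=
      condExp_sub hZYint hμ1Zint mX
    filter_upwards [e1, hμ1Zcond, hμ1] with ω w1 w2 w3
    rw [w1]
    simp only [Pi.sub_apply, Pi.zero_apply]
    rw [w2, ← w3]
    ring
  have hAcond : μ[A | mX] =ᵐ[μ] 0 := by
    have hAint2 : Integrable ((fun ω => (π ω)⁻¹) * g1) μ := by
      have h := hAint; rw [hA_eq] at h; exact h
    have hmul := condExp_mul_of_stronglyMeasurable_left (m := mX) hπm.measurable.inv.stronglyMeasurable hAint2 hg1int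
    calc μ[A | mX] =ᵐ[μ] μ[(fun ω => (π ω)⁻¹) * g1 | mX] :=
          condExp_congr_ae (ae_of_all μ fun ω => by rw [hA_eq]; rfl)
      _ =ᵐ[μ] (fun ω => (π ω)⁻¹) * μ[g1 | mX] := hmul
      _ =ᵐ[μ] 0 := by
          filter_upwards [hg1cond] with ω h
          simp only [Pi.mul_apply, Pi.zero_apply]
          rw [show (μ[g1 | mX]) ω = 0 from h]
          ring
  have hintA : ∫ ω, A ω ∂μ = 0 := by
    rw [← integral_condExp (μ := μ) hmX (f := A), integral_congr_ae hAcond]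
    simp
  -- ∫ B = 0
  have h1Zabs : ∀ ω, |1 - Z ω| ≤ 1 := by
    intro ω; rcases hZbin ω with h | h <;> simp [h]
  have h1ZYint : Integrable (fun ω => (1 - Z ω) * Y ω) μ := by
    rw [h1ZY]
    refine hY0.abs.mono'
      (((aemeasurable_const.sub hZm.aemeasurable).mul hY0.1.aemeasurable).aestronglyMeasurable) ?_
    refine ae_of_all μ fun ω => ?_
    rw [Real.norm_eq_abs, abs_mul]
    calc |1 - Z ω| * |Y0 ω| ≤ 1 * |Y0 ω| :=
          mul_le_mul_of_nonneg_right (h1Zabs ω) (abs_nonneg _)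
      _ = |Y0 ω| := one_mul _
  have hμ0Zint : Integrable (fun ω => μ0 ω * Z ω) μ := by
    refine hμ0int.abs.mono' ((hμ0am.mul hZm.aemeasurable).aestronglyMeasurable) ?_
    refine ae_of_all μ fun ω => ?_
    rw [Real.norm_eq_abs, abs_mul]
    calc |μ0 ω| * |Z ω| ≤ |μ0 ω| * 1 :=
          mul_le_mul_of_nonneg_left (hZabs ω) (abs_nonneg _)
      _ = |μ0 ω| := mul_one _
  set g0 : Ω → ℝ := fun ω => (1 - Z ω) * Y ω - (μ0 ω - μ0 ω * Z ω) with hg0_def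
  have hg0int : Integrable g0 μ := h1ZYint.sub (hμ0int.sub hμ0Zint)
  have hB_eq : B = fun ω => ((1 : ℝ) - π ω)⁻¹ * g0 ω := by
    funext ω; rw [hB_def, hg0_def]; simp only
    rw [div_eq_mul_inv]; ring
  have hμ0Zcond : μ[fun ω => μ0 ω * Z ω | mX] =ᵐ[μ] fun ω => μ0 ω * π ω := by
    have h := condExp_mul_of_stronglyMeasurable_left (m := mX) hμ0meas
      (show Integrable (μ0 * Z) μ from hμ0Zint) hZint
    rw [← hπ] at h
    exact (condExp_congr_ae (m := mX) (ae_of_all μ fun ω => rfl)).trans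
      (h.trans (ae_of_all μ fun ω => rfl))
  have hμ0cond : μ[μ0 | mX] = μ0 := condExp_of_stronglyMeasurable hmX hμ0meas hμ0int
  have hg0cond : μ[g0 | mX] =ᵐ[μ] 0 := by
    have e1 : μ[g0 | mX] =ᵐ[μ]
        μ[fun ω => (1 - Z ω) * Y ω | mX] - μ[fun ω => μ0 ω - μ0 ω * Z ω | mX] :=
      condExp_sub h1ZYint (hμ0int.sub hμ0Zint) mX
    have e2 : μ[fun ω => μ0 ω - μ0 ω * Z ω | mX] =ᵐ[μ]
        μ[μ0 | mX] - μ[fun ω => μ0 ω * Z ω | mX] :=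
      condExp_sub hμ0int hμ0Zint mX
    filter_upwards [e1, e2, hμ0Zcond, hμ0] with ω w1 w2 w3 w4
    rw [w1]
    simp only [Pi.sub_apply, Pi.zero_apply]
    rw [w2]
    simp only [Pi.sub_apply]
    rw [w3, hμ0cond, ← w4]
    ring
  have hBcond : μ[B | mX] =ᵐ[μ] 0 := by
    have hBint2 : Integrable ((fun ω => ((1 : ℝ) - π ω)⁻¹) * g0) μ := by
      have h := hBint; rw [hB_eq] at h; exact h
    have hmul := condExp_mul_of_stronglyMeasurable_left (m := mX)
      (stronglyMeasurable_const.sub hπm).measurable.inv.stronglyMeasurable hBint2 hg0int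
    calc μ[B | mX] =ᵐ[μ] μ[(fun ω => ((1 : ℝ) - π ω)⁻¹) * g0 | mX] :=
          condExp_congr_ae (ae_of_all μ fun ω => by rw [hB_eq]; rfl)
      _ =ᵐ[μ] (fun ω => ((1 : ℝ) - π ω)⁻¹) * μ[g0 | mX] := hmul
      _ =ᵐ[μ] 0 := by
          filter_upwards [hg0cond] with ω h
          simp only [Pi.mul_apply, Pi.zero_apply]
          rw [show (μ[g0 | mX]) ω = 0 from h]
          ring
  have hintB : ∫ ω, B ω ∂μ = 0 := by
    rw [← integral_condExp (μ := μ) hmX (f := B), integral_congr_ae hBcond]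
    simp
  -- final assembly
  rw [integral_congr_ae hIeq]
  have i2 : Integrable (fun ω => A ω + μ1 ω) μ := hAint.add hμ1int
  have i1 : Integrable (fun ω => A ω + μ1 ω - B ω) μ := i2.sub hBint
  rw [integral_sub i1 hμ0int, integral_sub i2 hBint, integral_add hAint hμ1int]
  rw [hintA, hintB, hintμ1, hintμ0, integral_sub hY1 hY0]
  ring
end

section
/- Posterior consistency via total variation of conditionals: if P* ≪ Q on a product space of infinite binary sequences and Δₙ = E_Q[dP*/dQ | Fₙ] → dP*/dQ in L¹(Q), then the expected total variation distance between the conditional laws P*(·|z₁,…,zₙ) and Q(·|z₁,…,zₙ) of the future sequence (z_{n+1}, z_{n+2}, …) converges to 0 under P*. -/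
open MeasureTheory ProbabilityTheory Filter

/-!
Write `X` for the past and `Y` for the future, `μ = P*`, `ν = Q`, `f = dμ/dν` and
`g = ν[f | σ(X)]`. On an atom `C = {X = x}` the conditional expectation `g` is the constant
`μ(C)/ν(C)`, so for every measurable `s`, with `S = C ∩ {Y ∈ s}`,
`μ(C)·P*(Y ∈ s | X = x) = ∫_S f dν` and `μ(C)·Q(Y ∈ s | X = x) = ∫_S g dν`.
Their difference is at most `∫_C |g - f| dν`, so `μ(C)` times the total variation distance of
the two conditional laws is too; summing over the finitely many atoms bounds the expected total
variation by `‖g - f‖_{L¹(ν)}`, which tends to `0` by hypothesis.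
-/

noncomputable def tvDist {α : Type*} [MeasurableSpace α] (μ ν : Measure α) : ℝ :=
  ⨆ A : {s : Set α // MeasurableSet s}, |(μ A.1).toReal - (ν A.1).toReal|

section TotalVariation

variable {α : Type*} [MeasurableSpace α] {μ ν : Measure α}

lemma tvDist_nonneg : 0 ≤ tvDist μ ν :=
  Real.iSup_nonneg fun _ => abs_nonneg _

lemma tvDist_le {r : ℝ} (h : ∀ s, MeasurableSet s → |μ.real s - ν.real s| ≤ r) :
    tvDist μ ν ≤ r :=
  have : Nonempty {s : Set α // MeasurableSet s} := ⟨⟨∅, .empty⟩⟩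
  ciSup_le fun A => h A.1 A.2

end TotalVariation

section Partition

variable {α β E : Type*} [MeasurableSpace α] [MeasurableSpace β] [MeasurableSingletonClass β]
  [Fintype β] [NormedAddCommGroup E] [NormedSpace ℝ E] {μ : Measure α} {X : α → β}

lemma integral_eq_sum_setIntegral_preimage_singleton (hX : Measurable X) {φ : α → E}
    (hφ : Integrable φ μ) : ∫ a, φ a ∂μ = ∑ x, ∫ a in X ⁻¹' {x}, φ a ∂μ := by
  rw [← integral_iUnion_fintype (fun x => hX (measurableSet_singleton x))
    (pairwise_disjoint_fiber X) fun _ => hφ.integrableOn, ← Set.preimage_iUnion,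
    Set.iUnion_of_singleton, Set.preimage_univ, setIntegral_univ]

lemma integral_comp_eq_sum_measureReal_preimage_singleton [CompleteSpace E]
    [IsFiniteMeasure μ] (hX : Measurable X) (h : β → E) :
    ∫ a, h (X a) ∂μ = ∑ x, μ.real (X ⁻¹' {x}) • h x := by
  rw [← integral_map hX.aemeasurable AEStronglyMeasurable.of_discrete,
    integral_fintype Integrable.of_finite]
  simp only [measureReal_def, Measure.map_apply hX (measurableSet_singleton _)]

end Partition

section CondDistrib

variable {α β Ω : Type*} [MeasurableSpace α] {mβ : MeasurableSpace β}
  [MeasurableSingletonClass β] [MeasurableSpace Ω] [StandardBorelSpace Ω] [Nonempty Ω]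
  {μ ν : Measure α} {X : α → β} {Y : α → Ω}

lemma condDistrib_real_mul_measureReal_preimage_singleton [IsFiniteMeasure μ]
    (hX : Measurable X) (hY : Measurable Y) (x : β) {s : Set Ω} (hs : MeasurableSet s) :
    (condDistrib Y X μ x).real s * μ.real (X ⁻¹' {x})
      = μ.real (X ⁻¹' {x} ∩ Y ⁻¹' s) := by
  have hC := hX (measurableSet_singleton x)
  simp only [measureReal_def]
  rw [← ENNReal.toReal_mul,
    ← setLIntegral_preimage_condDistrib hX hY.aemeasurable hs (measurableSet_singleton x),
    setLIntegral_congr_fun hC fun a (ha : X a = x) => by rw [ha], setLIntegral_const]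

variable [IsFiniteMeasure ν] {f : α → ℝ}

lemma measureReal_mul_setIntegral_condExp_comap_of_subset (hX : Measurable X)
    (hf : Integrable f ν) (x : β) {S : Set α} (hS : MeasurableSet S) (hSx : S ⊆ X ⁻¹' {x}) :
    ν.real (X ⁻¹' {x}) * ∫ a in S, (ν[f | MeasurableSpace.comap X mβ]) a ∂ν
      = ν.real S * ∫ a in X ⁻¹' {x}, f a ∂ν := by
  rcases (X ⁻¹' {x}).eq_empty_or_nonempty with hempty | ⟨a₀, ha₀⟩
  · simp [hempty, Set.subset_empty_iff.1 (hempty ▸ hSx)]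
  have hconst : ∀ a ∈ X ⁻¹' {x}, (ν[f | MeasurableSpace.comap X mβ]) a
      = (ν[f | MeasurableSpace.comap X mβ]) a₀ := fun a ha =>
    stronglyMeasurable_condExp.measurable.factorsThrough (ha.trans ha₀.symm)
  have hatom : MeasurableSet[MeasurableSpace.comap X mβ] (X ⁻¹' {x}) :=
    ⟨{x}, measurableSet_singleton x, rfl⟩
  rw [← setIntegral_condExp hX.comap_le hf hatom,
    setIntegral_congr_fun (hX (measurableSet_singleton x)) hconst,
    setIntegral_congr_fun hS fun a ha => hconst a (hSx ha), setIntegral_const, setIntegral_const,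
    smul_eq_mul, smul_eq_mul]
  ring

lemma measureReal_mul_abs_condDistrib_sub_le [IsFiniteMeasure μ] (hX : Measurable X)
    (hY : Measurable Y) (hfi : Integrable f ν)
    (hf : ∀ s, MeasurableSet s → ∫ a in s, f a ∂ν = μ.real s) (x : β) {s : Set Ω}
    (hs : MeasurableSet s) :
    μ.real (X ⁻¹' {x}) * |(condDistrib Y X μ x).real s - (condDistrib Y X ν x).real s|
      ≤ ∫ a in X ⁻¹' {x}, |(ν[f | MeasurableSpace.comap X mβ]) a - f a| ∂ν := by
  set g := ν[f | MeasurableSpace.comap X mβ]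
  set C := X ⁻¹' {x}
  set S := C ∩ Y ⁻¹' s
  have hC : MeasurableSet C := hX (measurableSet_singleton x)
  have hS : MeasurableSet S := hC.inter (hY hs)
  rcases measureReal_nonneg.eq_or_lt with hμC | hμC
  · rw [← hμC, zero_mul]
    exact integral_nonneg fun _ => abs_nonneg _
  have hνC : ν.real C ≠ 0 := by
    intro h
    rw [← hf C hC, Measure.restrict_eq_zero.2 ((measureReal_eq_zero_iff).1 h),
      integral_zero_measure] at hμC
    exact hμC.ne rfl
  have hμS : μ.real C * (condDistrib Y X μ x).real s = ∫ a in S, f a ∂ν := by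
    rw [hf S hS, mul_comm, condDistrib_real_mul_measureReal_preimage_singleton hX hY x hs]
  have hνS : μ.real C * (condDistrib Y X ν x).real s = ∫ a in S, g a ∂ν := by
    refine mul_left_cancel₀ hνC ?_
    rw [measureReal_mul_setIntegral_condExp_comap_of_subset hX hfi x hS Set.inter_subset_left,
      hf C hC, ← condDistrib_real_mul_measureReal_preimage_singleton hX hY x hs]
    ring
  calc μ.real C * |(condDistrib Y X μ x).real s - (condDistrib Y X ν x).real s|
      = |∫ a in S, (g a - f a) ∂ν| := by
        rw [← abs_of_pos hμC, ← abs_mul, mul_sub, hμS, hνS, abs_sub_comm,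
          integral_sub integrable_condExp.integrableOn hfi.integrableOn]
    _ ≤ ∫ a in S, |g a - f a| ∂ν := abs_integral_le_integral_abs
    _ ≤ ∫ a in C, |g a - f a| ∂ν :=
        setIntegral_mono_set (integrable_condExp.sub hfi).abs.integrableOn
          (.of_forall fun _ => abs_nonneg _) Set.inter_subset_left.eventuallyLE

lemma measureReal_mul_tvDist_condDistrib_le [IsFiniteMeasure μ] (hX : Measurable X)
    (hY : Measurable Y) (hfi : Integrable f ν)
    (hf : ∀ s, MeasurableSet s → ∫ a in s, f a ∂ν = μ.real s) (x : β) :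
    μ.real (X ⁻¹' {x}) * tvDist (condDistrib Y X μ x) (condDistrib Y X ν x)
      ≤ ∫ a in X ⁻¹' {x}, |(ν[f | MeasurableSpace.comap X mβ]) a - f a| ∂ν := by
  rcases measureReal_nonneg.eq_or_lt with hμC | hμC
  · rw [← hμC, zero_mul]
    exact integral_nonneg fun _ => abs_nonneg _
  rw [← le_div_iff₀' hμC]
  exact tvDist_le fun s hs =>
    (le_div_iff₀' hμC).2 (measureReal_mul_abs_condDistrib_sub_le hX hY hfi hf x hs)

theorem integral_tvDist_condDistrib_le [Fintype β] [IsFiniteMeasure μ] (hX : Measurable X)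
    (hY : Measurable Y) (hfi : Integrable f ν)
    (hf : ∀ s, MeasurableSet s → ∫ a in s, f a ∂ν = μ.real s) :
    ∫ a, tvDist (condDistrib Y X μ (X a)) (condDistrib Y X ν (X a)) ∂μ
      ≤ ∫ a, |(ν[f | MeasurableSpace.comap X mβ]) a - f a| ∂ν := by
  rw [integral_comp_eq_sum_measureReal_preimage_singleton hX
      fun x => tvDist (condDistrib Y X μ x) (condDistrib Y X ν x),
    integral_eq_sum_setIntegral_preimage_singleton hX
      (φ := fun a => |(ν[f | MeasurableSpace.comap X mβ]) a - f a|)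
      (integrable_condExp.sub hfi).abs]
  exact Finset.sum_le_sum fun x _ => measureReal_mul_tvDist_condDistrib_le hX hY hfi hf x

end CondDistrib

/-- Posterior consistency via total variation of conditionals: if `P* ≪ Q` on the space of
infinite binary sequences and `Δₙ = E_Q[dP*/dQ | Fₙ] → dP*/dQ` in `L¹(Q)`, then the
expected total variation distance between the conditional laws `P*(·|z₁,…,zₙ)` and
`Q(·|z₁,…,zₙ)` of the future sequence `(z_{n+1}, z_{n+2}, …)` converges to `0` under `P*`.
Here the conditional laws are the regular conditional distributions (`condDistrib`) of the
future coordinates given the first `n` coordinates. -/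
theorem stmt8
    (Pstar Q : Measure (ℕ → Bool)) [IsProbabilityMeasure Pstar] [IsProbabilityMeasure Q]
    (habs : Pstar ≪ Q)
    -- past: first n coordinates; future: coordinates after time n
    (past : (n : ℕ) → (ℕ → Bool) → (Fin n → Bool))
    (hpast : ∀ n z i, past n z i = z i)
    (future : ℕ → (ℕ → Bool) → (ℕ → Bool))
    (hfuture : ∀ n z k, future n z k = z (n + k))
    -- Fₙ = σ(z₁,…,zₙ)
    (F : ℕ → MeasurableSpace (ℕ → Bool))
    (hF : ∀ n, F n = MeasurableSpace.comap (past n) inferInstance)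
    -- density and its conditional expectations
    (Δ : (ℕ → Bool) → ℝ) (hΔ : Δ =ᵐ[Q] fun z => (Pstar.rnDeriv Q z).toReal)
    (hΔint : Integrable Δ Q)
    -- L¹ convergence of the conditional likelihood ratios Δₙ → Δ
    (hL1 : Tendsto (fun n => ∫ z, |(Q[Δ | F n]) z - Δ z| ∂Q) atTop (nhds 0)) :
    Tendsto (fun n => ∫ z,
        tvDist (condDistrib (future n) (past n) Pstar (past n z))
               (condDistrib (future n) (past n) Q (past n z)) ∂Pstar)
      atTop (nhds 0) := by
  have hpast_meas : ∀ n, Measurable (past n) := fun n =>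
    measurable_pi_lambda _ fun i => by simp_rw [hpast]; exact measurable_pi_apply _
  have hfuture_meas : ∀ n, Measurable (future n) := fun n =>
    measurable_pi_lambda _ fun k => by simp_rw [hfuture]; exact measurable_pi_apply _
  have hdensity : ∀ s, MeasurableSet s → ∫ z in s, Δ z ∂Q = Pstar.real s := fun s _ =>
    (integral_congr_ae (ae_restrict_of_ae hΔ)).trans (Measure.setIntegral_toReal_rnDeriv habs s)
  refine squeeze_zero (fun n => integral_nonneg fun _ => tvDist_nonneg) (fun n => ?_) hL1
  rw [hF n]
  exact integral_tvDist_condDistrib_le (hpast_meas n) (hfuture_meas n) hΔint hdensity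
end

section
/- As a consequence, the one-step-ahead predictive probability is consistent: under the hypotheses above, |P*(z_{n+1}=1 | z₁,…,zₙ) − Q(z_{n+1}=1 | z₁,…,zₙ)| → 0 in P*-probability. -/
/-! Write `D = Q[Δ|m]`. The abstract Bayes formula `P[h|m] * D = Q[h * Δ|m]` gives
`(P[h|m] - Q[h|m]) * D = Q[h * (Δ - D)|m]`. As `|P[h|m] - Q[h|m]|` is `m`-measurable, its `P`-mean
is its `Q`-mean against `Δ`, hence against `D`, and so it is at most `∫ |D - Δ| ∂Q` when `|h| ≤ 1`.
Thus `L¹(Q)`-convergence of the conditional likelihood ratios makes the difference of the two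
predictive probabilities tend to `0` in `L¹(P*)`, hence in `P*`-probability. -/

open MeasureTheory Filter

lemma integral_mul_condExp_of_stronglyMeasurable {α : Type*} {m m0 : MeasurableSpace α}
    {μ : Measure α} (hm : m ≤ m0) [SigmaFinite (μ.trim hm)] {f g : α → ℝ}
    (hf : StronglyMeasurable[m] f) (hfg : Integrable (f * g) μ) (hg : Integrable g μ) :
    ∫ x, (f * μ[g|m]) x ∂μ = ∫ x, (f * g) x ∂μ := by
  rw [← integral_condExp hm (f := f * g)]
  exact integral_congr_ae (condExp_mul_of_stronglyMeasurable_left hf hfg hg).symm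

section Density

variable {α : Type*} {m m0 : MeasurableSpace α} {P Q : Measure α}
  [IsFiniteMeasure P] [IsFiniteMeasure Q] {Δ h : α → ℝ}

lemma integrable_mul_density_iff (hPQ : P ≪ Q) (hΔ : Δ =ᵐ[Q] fun x => (P.rnDeriv Q x).toReal)
    {f : α → ℝ} : Integrable (f * Δ) Q ↔ Integrable f P := by
  rw [← integrable_toReal_rnDeriv_mul_iff hPQ]
  exact integrable_congr (hΔ.mono fun x hx => by simp only [Pi.mul_apply, hx, mul_comm])

lemma setIntegral_mul_density (hPQ : P ≪ Q) (hΔ : Δ =ᵐ[Q] fun x => (P.rnDeriv Q x).toReal)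
    (f : α → ℝ) (s : Set α) : ∫ x in s, (f * Δ) x ∂Q = ∫ x in s, f x ∂P := by
  rw [← setIntegral_toReal_rnDeriv_mul' hPQ f s]
  exact integral_congr_ae (ae_restrict_of_ae (hΔ.mono fun x hx => by
    simp only [Pi.mul_apply, hx, mul_comm]))

omit [IsFiniteMeasure Q] in
lemma integrable_condExp_of_absolutelyContinuous (hPQ : P ≪ Q) {R : ℝ}
    (hh : ∀ᵐ x ∂Q, |h x| ≤ R) : Integrable (Q[h|m]) P := by
  by_cases hm : m ≤ m0
  · exact Integrable.of_bound (stronglyMeasurable_condExp.mono hm).aestronglyMeasurable R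
      (hPQ.ae_le (ae_bdd_abs_condExp_of_ae_bdd_abs hh))
  · simp [condExp_of_not_le hm]

theorem condExp_mul_condExp_density (hm : m ≤ m0) (hPQ : P ≪ Q)
    (hΔ : Δ =ᵐ[Q] fun x => (P.rnDeriv Q x).toReal) (hh : Integrable h P) :
    P[h|m] * Q[Δ|m] =ᵐ[Q] Q[h * Δ|m] := by
  have hΔint : Integrable Δ Q := Measure.integrable_toReal_rnDeriv.congr hΔ.symm
  have hhΔ : Integrable (P[h|m] * Δ) Q := (integrable_mul_density_iff hPQ hΔ).2 integrable_condExp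
  have pull : Q[P[h|m] * Δ|m] =ᵐ[Q] P[h|m] * Q[Δ|m] :=
    condExp_mul_of_stronglyMeasurable_left stronglyMeasurable_condExp hhΔ hΔint
  refine ae_eq_condExp_of_forall_setIntegral_eq hm ((integrable_mul_density_iff hPQ hΔ).2 hh)
    (fun s _ _ => (integrable_condExp.congr pull).integrableOn) (fun s hs _ => ?_)
    (stronglyMeasurable_condExp.mul stronglyMeasurable_condExp).aestronglyMeasurable
  calc ∫ x in s, (P[h|m] * Q[Δ|m]) x ∂Q = ∫ x in s, Q[P[h|m] * Δ|m] x ∂Q :=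
        setIntegral_congr_ae (hm s hs) (pull.mono fun x hx _ => hx.symm)
    _ = ∫ x in s, P[h|m] x ∂P := by
        rw [setIntegral_condExp hm hhΔ hs, setIntegral_mul_density hPQ hΔ]
    _ = ∫ x in s, (h * Δ) x ∂Q := by
        rw [setIntegral_condExp hm hh hs, setIntegral_mul_density hPQ hΔ]

theorem integral_abs_condExp_sub_condExp_le (hPQ : P ≪ Q)
    (hΔ : Δ =ᵐ[Q] fun x => (P.rnDeriv Q x).toReal) (hh : Measurable h) (hh1 : ∀ x, |h x| ≤ 1) :
    ∫ x, |P[h|m] x - Q[h|m] x| ∂P ≤ ∫ x, |Q[Δ|m] x - Δ x| ∂Q := by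
  by_cases hm : m ≤ m0
  swap
  · simpa [condExp_of_not_le hm] using integral_nonneg fun x => abs_nonneg _
  set D := Q[Δ|m]
  have hΔint : Integrable Δ Q := Measure.integrable_toReal_rnDeriv.congr hΔ.symm
  have hD0 : 0 ≤ᵐ[Q] D := condExp_nonneg (hΔ.mono fun x hx => hx ▸ ENNReal.toReal_nonneg)
  have hhP : Integrable h P := Integrable.of_bound hh.aestronglyMeasurable 1 (ae_of_all _ hh1)
  have hhQ : Integrable h Q := Integrable.of_bound hh.aestronglyMeasurable 1 (ae_of_all _ hh1)
  have hhΔ : Integrable (h * Δ) Q := (integrable_mul_density_iff hPQ hΔ).2 hhP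
  have hhD : Integrable (h * D) Q :=
    integrable_condExp.bdd_mul hh.aestronglyMeasurable (ae_of_all _ hh1)
  have hhΔD : Integrable (h * (Δ - D)) Q := by
    rw [mul_sub]
    exact hhΔ.sub hhD
  have hXD : (P[h|m] - Q[h|m]) * D =ᵐ[Q] Q[h * (Δ - D)|m] := by
    filter_upwards [condExp_mul_condExp_density hm hPQ hΔ hhP,
      condExp_mul_of_stronglyMeasurable_right stronglyMeasurable_condExp hhD hhQ,
      condExp_sub hhΔ hhD m] with x hPD hQD hsub
    simp only [Pi.mul_apply, Pi.sub_apply, mul_sub] at *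
    rw [sub_mul, hPD, ← hQD, ← hsub]
  set X := |P[h|m] - Q[h|m]|
  have hXm : StronglyMeasurable[m] X :=
    (stronglyMeasurable_condExp.sub stronglyMeasurable_condExp :
      StronglyMeasurable[m] (P[h|m] - Q[h|m])).norm
  have hXP : Integrable X P :=
    (integrable_condExp.sub (integrable_condExp_of_absolutelyContinuous hPQ (ae_of_all _ hh1))).abs
  calc ∫ x, X x ∂P = ∫ x, (X * Δ) x ∂Q := by
        rw [← setIntegral_univ, ← setIntegral_mul_density hPQ hΔ, setIntegral_univ]
    _ = ∫ x, (X * D) x ∂Q := (integral_mul_condExp_of_stronglyMeasurable hm hXm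
        ((integrable_mul_density_iff hPQ hΔ).2 hXP) hΔint).symm
    _ = ∫ x, |Q[h * (Δ - D)|m] x| ∂Q := integral_congr_ae <| by
        filter_upwards [hXD, hD0] with x hx hx0
        simp only [X, Pi.mul_apply, Pi.abs_apply, ← hx, abs_mul, abs_of_nonneg hx0]
    _ ≤ ∫ x, |(h * (Δ - D)) x| ∂Q := integral_abs_condExp_le _
    _ ≤ ∫ x, |D x - Δ x| ∂Q := by
        refine integral_mono hhΔD.abs (integrable_condExp.sub hΔint).abs fun x => ?_
        simp only [Pi.mul_apply, Pi.sub_apply, abs_mul, abs_sub_comm (Δ x)]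
        exact mul_le_of_le_one_left (abs_nonneg _) (hh1 x)

end Density

lemma tendstoInMeasure_zero_of_tendsto_integral_norm {α ι : Type*} {m0 : MeasurableSpace α}
    {μ : Measure α} {l : Filter ι} {f : ι → α → ℝ} (hf : ∀ i, Integrable (f i) μ)
    (hlim : Tendsto (fun i => ∫ x, ‖f i x‖ ∂μ) l (nhds 0)) : TendstoInMeasure μ f l 0 := by
  refine tendstoInMeasure_of_tendsto_eLpNorm one_ne_zero (fun i => (hf i).aestronglyMeasurable)
    aestronglyMeasurable_const ?_
  simp only [sub_zero, eLpNorm_one_eq_lintegral_enorm]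
  simp_rw [← ofReal_integral_norm_eq_lintegral_enorm (hf _)]
  simpa using ENNReal.tendsto_ofReal hlim

theorem stmt9_general
    (Pstar Q : Measure (ℕ → Bool)) [IsProbabilityMeasure Pstar] [IsProbabilityMeasure Q]
    (habs : Pstar ≪ Q)
    -- Fₙ = σ(z₁,…,zₙ)
    (F : ℕ → MeasurableSpace (ℕ → Bool))
    -- indicator of the event {z_{n+1} = 1}
    (ind : ℕ → (ℕ → Bool) → ℝ)
    (hind : ∀ n z, ind n z = if z n then 1 else 0)
    -- density and L¹ convergence of the conditional likelihood ratios
    (Δ : (ℕ → Bool) → ℝ) (hΔ : Δ =ᵐ[Q] fun z => (Pstar.rnDeriv Q z).toReal)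
    (hL1 : Tendsto (fun n => ∫ z, |(Q[Δ | F n]) z - Δ z| ∂Q) atTop (nhds 0)) :
    TendstoInMeasure Pstar
      (fun n z => |(Pstar[ind n | F n]) z - (Q[ind n | F n]) z|) atTop (fun _ => (0 : ℝ)) := by
  have hind_meas : ∀ n, Measurable (ind n) := fun n => by
    rw [show ind n = (fun b : Bool => if b then (1 : ℝ) else 0) ∘ fun z => z n from funext (hind n)]
    exact (measurable_of_countable _).comp (measurable_pi_apply n)
  have hind_le : ∀ n z, |ind n z| ≤ 1 := fun n z => by
    rw [hind]
    split <;> simp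
  refine tendstoInMeasure_zero_of_tendsto_integral_norm (fun n => (integrable_condExp.sub
    (integrable_condExp_of_absolutelyContinuous habs (ae_of_all _ (hind_le n)))).abs) ?_
  simp only [Real.norm_eq_abs, abs_abs]
  exact squeeze_zero (fun n => integral_nonneg fun z => abs_nonneg _)
    (fun n => integral_abs_condExp_sub_condExp_le habs hΔ (hind_meas n) (hind_le n)) hL1

/-- One-step-ahead predictive consistency: for an infinite binary sequence with true law
`P*` and prior-predictive law `Q`, `P* ≪ Q`, `Fₙ = σ(z₁,…,zₙ)`, if the conditional
likelihood ratios `Δₙ = E_Q[dP*/dQ | Fₙ]` converge to `Δ = dP*/dQ` in `L¹(Q)`, then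
`|P*(z_{n+1}=1 | z₁,…,zₙ) − Q(z_{n+1}=1 | z₁,…,zₙ)| → 0` in `P*`-probability. -/
theorem stmt9
    (Pstar Q : Measure (ℕ → Bool)) [IsProbabilityMeasure Pstar] [IsProbabilityMeasure Q]
    (habs : Pstar ≪ Q)
    (past : (n : ℕ) → (ℕ → Bool) → (Fin n → Bool))
    (hpast : ∀ n z i, past n z i = z i)
    -- Fₙ = σ(z₁,…,zₙ)
    (F : ℕ → MeasurableSpace (ℕ → Bool))
    (hF : ∀ n, F n = MeasurableSpace.comap (past n) inferInstance)
    -- indicator of the event {z_{n+1} = 1}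
    (ind : ℕ → (ℕ → Bool) → ℝ)
    (hind : ∀ n z, ind n z = if z n then 1 else 0)
    -- density and L¹ convergence of the conditional likelihood ratios
    (Δ : (ℕ → Bool) → ℝ) (hΔ : Δ =ᵐ[Q] fun z => (Pstar.rnDeriv Q z).toReal)
    (hΔint : Integrable Δ Q)
    (hL1 : Tendsto (fun n => ∫ z, |(Q[Δ | F n]) z - Δ z| ∂Q) atTop (nhds 0)) :
    TendstoInMeasure Pstar
      (fun n z => |(Pstar[ind n | F n]) z - (Q[ind n | F n]) z|) atTop (fun _ => (0 : ℝ)) :=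
  stmt9_general Pstar Q habs F ind hind Δ hΔ hL1
end

section
/- The logistic likelihood admits the Polya–Gamma integral representation: for any real η and y ∈ {0,1}, exp(yη)/(1+exp(η)) = (1/2)·exp(κη)·∫₀^∞ exp(−ω η²/2) p_PG(ω; 1, 0) dω, where κ = y − 1/2 and p_PG(·;1,0) is the density of the Polya–Gamma(1,0) distribution. -/
open Real

/-! The identity `exp (y η) / (1 + exp η) = exp ((y - 1/2) η) / (2 cosh (η/2))` reduces the claim
to `∫ exp (-ω η²/2) p_PG(ω) dω = 1 / cosh (η/2)`, which is the Laplace transform of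
Polya–Gamma(1,0) at `t = η²/2`, since `√(η²/4) = |η/2|` and `cosh` is even. -/

theorem exp_mul_div_one_add_exp (y η : ℝ) :
    exp (y * η) / (1 + exp η) = exp ((y - 1 / 2) * η) / (2 * cosh (η / 2)) := by
  have hsplit : exp (y * η) = exp ((y - 1 / 2) * η) * exp (η / 2) := by
    rw [← exp_add]; ring_nf
  have hdenom : 1 + exp η = 2 * cosh (η / 2) * exp (η / 2) := by
    rw [cosh_eq, mul_div_cancel₀ _ two_ne_zero, add_mul, ← exp_add, ← exp_add]
    ring_nf
    rw [exp_zero, add_comm]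
  rw [hsplit, hdenom, mul_div_mul_right _ _ (exp_pos _).ne']

theorem cosh_sqrt_sq_div_two_div_two (η : ℝ) : cosh (√(η ^ 2 / 2 / 2)) = cosh (η / 2) := by
  rw [show η ^ 2 / 2 / 2 = (η / 2) ^ 2 by ring, sqrt_sq_eq_abs, cosh_abs]

theorem integral_exp_neg_mul_sq_div_two_eq_inv_cosh {p : ℝ → ℝ}
    (hLaplace : ∀ t : ℝ, 0 ≤ t →
      ∫ ω in Set.Ioi (0 : ℝ), exp (-(ω * t)) * p ω = (cosh (√(t / 2)))⁻¹) (η : ℝ) :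
    ∫ ω in Set.Ioi (0 : ℝ), exp (-(ω * η ^ 2 / 2)) * p ω = (cosh (η / 2))⁻¹ := by
  simp_rw [mul_div_assoc]
  rw [hLaplace _ (by positivity), cosh_sqrt_sq_div_two_div_two]

theorem stmt10_general (p : ℝ → ℝ)
    (hLaplace : ∀ t : ℝ, 0 ≤ t →
      ∫ ω in Set.Ioi (0 : ℝ), Real.exp (-(ω * t)) * p ω = (Real.cosh (Real.sqrt (t / 2)))⁻¹)
    (η y : ℝ) :
    Real.exp (y * η) / (1 + Real.exp η) =
      (1 / 2) * Real.exp ((y - 1 / 2) * η) *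
        ∫ ω in Set.Ioi (0 : ℝ), Real.exp (-(ω * η ^ 2 / 2)) * p ω := by
  rw [integral_exp_neg_mul_sq_div_two_eq_inv_cosh hLaplace, exp_mul_div_one_add_exp]
  field_simp

/-- The logistic likelihood admits the Polya–Gamma integral representation: for any real `η`
and `y ∈ {0,1}`, `exp(yη)/(1+exp(η)) = (1/2)·exp(κη)·∫₀^∞ exp(−ω η²/2) p_PG(ω; 1, 0) dω`,
where `κ = y − 1/2` and `p_PG(·;1,0)` is the density of the Polya–Gamma(1,0) distribution,
characterized by its Laplace transform `∫₀^∞ exp(−ωt) p_PG(ω;1,0) dω = 1/cosh(√(t/2))`. -/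
theorem stmt10 (p : ℝ → ℝ) (hp : ∀ ω, 0 ≤ p ω)
    (hLaplace : ∀ t : ℝ, 0 ≤ t →
      ∫ ω in Set.Ioi (0 : ℝ), Real.exp (-(ω * t)) * p ω = (Real.cosh (Real.sqrt (t / 2)))⁻¹)
    (η y : ℝ) (hy : y = 0 ∨ y = 1) :
    Real.exp (y * η) / (1 + Real.exp η) =
      (1 / 2) * Real.exp ((y - 1 / 2) * η) *
        ∫ ω in Set.Ioi (0 : ℝ), Real.exp (-(ω * η ^ 2 / 2)) * p ω :=
  stmt10_general p hLaplace η y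
end
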